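/- Let G be a finite simple graph in which every vertex has positive degree, and let i, j, k be three pairwise adjacent marked vertices with marked set M = {i,j,k}. Define l_{ij} = (deg(i)+deg(j)−deg(k))/2 − 1, l_{ik} = (deg(i)+deg(k)−deg(j))/2 − 1, l_{jk} = (deg(j)+deg(k)−deg(i))/2 − 1. Then the state φ defined by φ = −a·l_{ij} on both darts between i and j, φ = −a·l_{ik} on both darts between i and k, φ = −a·l_{jk} on both darts between j and k, and φ(e) = a on every other dart, is fixed by one step of the search algorithm: (S∘C∘Q)φ = φ. -/

import Mathlib

namespace GraphWalk

variable {V : Type*}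

/-- The flip-flop shift operator `S` on the darts of a simple graph:
`(Sψ)(e) = ψ(e.symm)`. -/
noncomputable def shift (G : SimpleGraph V) (ψ : G.Dart → ℂ) : G.Dart → ℂ :=
  fun e => ψ e.symm

/-- The Grover coin `C`:
`(Cψ)(e) = (2/deg(e.fst)) Σ_{e' : e'.fst = e.fst} ψ(e') − ψ(e)`. -/
noncomputable def coin [Fintype V] [DecidableEq V] (G : SimpleGraph V)
    [DecidableRel G.Adj] (ψ : G.Dart → ℂ) : G.Dart → ℂ :=
  fun e => (2 / (G.degree e.fst : ℂ)) *
      (∑ e' ∈ Finset.univ.filter (fun e' : G.Dart => e'.fst = e.fst), ψ e') - ψ e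

/-- The query `Q`, flipping the sign of all amplitudes at marked vertices. -/
noncomputable def query [DecidableEq V] (G : SimpleGraph V) (M : Finset V)
    (ψ : G.Dart → ℂ) : G.Dart → ℂ :=
  fun e => if e.fst ∈ M then -ψ e else ψ e

/-- One step of the search algorithm, `U' = S ∘ C ∘ Q`. -/
noncomputable def step [Fintype V] [DecidableEq V] (G : SimpleGraph V)
    [DecidableRel G.Adj] (M : Finset V) (ψ : G.Dart → ℂ) : G.Dart → ℂ :=
  shift G (coin G (query G M ψ))

/-- One step of the quantum walk without query, `U = S ∘ C`. -/
noncomputable def walk [Fintype V] [DecidableEq V] (G : SimpleGraph V)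
    [DecidableRel G.Adj] (ψ : G.Dart → ℂ) : G.Dart → ℂ :=
  shift G (coin G ψ)

end GraphWalk

/-! The state `φ` is invariant under reversing darts, so `S ∘ C ∘ Q` fixes it as soon as `C ∘ Q`
does. At an unmarked vertex `φ` equals `a` on every outgoing dart, and the Grover coin fixes a state
that is constant on a star. At a marked vertex `x` with triangle neighbours `y, z`, the outgoing
amplitudes sum to `-a (l_{xy} + 1) - a (l_{xz} + 1) + deg(x) a = 0`, since
`l_{xy} + l_{xz} = deg(x) - 2`; so the coin acts there as `-1` and undoes the sign flip of the
query. -/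

namespace SimpleGraph

lemma sum_dart_fst_eq_sum_neighborFinset {V M : Type*} [Fintype V] [DecidableEq V]
    [AddCommMonoid M] (G : SimpleGraph V) [DecidableRel G.Adj] (v : V) (f : V × V → M) :
    ∑ e ∈ Finset.univ.filter (fun e : G.Dart => e.fst = v), f e.toProd
      = ∑ w ∈ G.neighborFinset v, f (v, w) := by
  rw [G.dart_fst_fiber v, Finset.sum_image fun _ _ _ _ h => G.dartOfNeighborSet_injective v h]
  exact (Finset.sum_subtype _ (G.mem_neighborFinset v) (fun w => f (v, w))).symm

end SimpleGraph

namespace GraphWalk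

variable {V : Type*} [Fintype V] [DecidableEq V] (G : SimpleGraph V) [DecidableRel G.Adj]

lemma coin_apply_of_sum_eq_zero {ψ : G.Dart → ℂ} {e : G.Dart}
    (h : ∑ e' ∈ Finset.univ.filter (fun e' : G.Dart => e'.fst = e.fst), ψ e' = 0) :
    coin G ψ e = -ψ e := by
  simp [coin, h]

lemma coin_apply_of_const {ψ : G.Dart → ℂ} {e : G.Dart}
    (h : ∀ e' : G.Dart, e'.fst = e.fst → ψ e' = ψ e) : coin G ψ e = ψ e := by
  have hdeg : (G.degree e.fst : ℂ) ≠ 0 :=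
    Nat.cast_ne_zero.2 ((G.degree_pos_iff_exists_adj _).2 ⟨_, e.adj⟩).ne'
  have hsum : ∑ e' ∈ Finset.univ.filter (fun e' : G.Dart => e'.fst = e.fst), ψ e'
      = G.degree e.fst * ψ e := by
    rw [Finset.sum_congr rfl fun e' he' => h e' (Finset.mem_filter.1 he').2, Finset.sum_const,
      G.dart_fst_fiber_card_eq_degree, nsmul_eq_mul]
  rw [coin, hsum]
  field_simp
  ring

theorem step_eq_self {M : Finset V} {ψ : G.Dart → ℂ} (hsymm : ∀ e, ψ e.symm = ψ e)
    (hmarked : ∀ v ∈ M,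
      ∑ e ∈ Finset.univ.filter (fun e : G.Dart => e.fst = v), ψ e = 0)
    (hunmarked : ∀ e e' : G.Dart, e.fst ∉ M → e'.fst = e.fst → ψ e' = ψ e) :
    step G M ψ = ψ := by
  funext e
  change coin G (query G M ψ) e.symm = ψ e
  by_cases hv : e.symm.fst ∈ M
  · have hquery : ∀ e' ∈ Finset.univ.filter (fun e' : G.Dart => e'.fst = e.symm.fst),
        query G M ψ e' = -ψ e' := fun e' he' => by
      rw [query, if_pos ((Finset.mem_filter.1 he').2 ▸ hv)]
    have hsum : ∑ e' ∈ Finset.univ.filter (fun e' : G.Dart => e'.fst = e.symm.fst),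
        query G M ψ e' = 0 := by
      rw [Finset.sum_congr rfl hquery, Finset.sum_neg_distrib, hmarked _ hv, neg_zero]
    rw [coin_apply_of_sum_eq_zero G hsum, query, if_pos hv, hsymm, neg_neg]
  · have hquery : ∀ e', e'.fst = e.symm.fst → query G M ψ e' = ψ e' := fun e' he' => by
      rw [query, if_neg (he' ▸ hv)]
    have hconst : ∀ e', e'.fst = e.symm.fst → query G M ψ e' = query G M ψ e.symm :=
      fun e' he' => by rw [hquery _ he', hquery _ rfl, hunmarked _ _ hv he']
    rw [coin_apply_of_const G hconst, hquery _ rfl, hsymm]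

noncomputable def triangleAmp (i j k : V) (a : ℂ) (p : V × V) : ℂ :=
  if p = (i, j) ∨ p = (j, i) then
    -a * (((G.degree i : ℂ) + (G.degree j : ℂ) - (G.degree k : ℂ)) / 2 - 1)
  else if p = (i, k) ∨ p = (k, i) then
    -a * (((G.degree i : ℂ) + (G.degree k : ℂ) - (G.degree j : ℂ)) / 2 - 1)
  else if p = (j, k) ∨ p = (k, j) then
    -a * (((G.degree j : ℂ) + (G.degree k : ℂ) - (G.degree i : ℂ)) / 2 - 1)
  else a

variable {G}

lemma triangleAmp_swap_left (i j k : V) (a : ℂ) :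
    triangleAmp G j i k a = triangleAmp G i j k a := by
  funext p
  simp only [triangleAmp]
  split_ifs <;> grind

lemma triangleAmp_swap_right (i j k : V) (a : ℂ) :
    triangleAmp G i k j a = triangleAmp G i j k a := by
  funext p
  simp only [triangleAmp]
  split_ifs <;> grind

lemma triangleAmp_swap (i j k : V) (a : ℂ) (p : V × V) :
    triangleAmp G i j k a p.swap = triangleAmp G i j k a p := by
  simp only [triangleAmp]
  split_ifs <;> grind

lemma triangleAmp_of_fst_notMem {i j k : V} (a : ℂ) {p : V × V}
    (hp : p.1 ∉ ({i, j, k} : Finset V)) : triangleAmp G i j k a p = a := by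
  simp only [triangleAmp]
  split_ifs <;> grind

lemma sum_triangleAmp_fst {i j k : V} (hij : G.Adj i j) (hik : G.Adj i k) (hjk : G.Adj j k)
    (a : ℂ) : ∑ w ∈ G.neighborFinset i, triangleAmp G i j k a (i, w) = 0 := by
  have hsub : {j, k} ⊆ G.neighborFinset i := by
    simp [Finset.insert_subset_iff, hij, hik]
  have hrest : ∀ w ∈ G.neighborFinset i, w ∉ ({j, k} : Finset V) →
      triangleAmp G i j k a (i, w) - a = 0 := by
    intro w hw hwjk
    have hwi : w ≠ i := (G.ne_of_adj ((G.mem_neighborFinset i w).1 hw)).symm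
    simp only [triangleAmp]
    split_ifs <;> grind
  have hsum : ∑ w ∈ G.neighborFinset i, (triangleAmp G i j k a (i, w) - a)
      = (triangleAmp G i j k a (i, j) - a) + (triangleAmp G i j k a (i, k) - a) := by
    rw [← Finset.sum_subset hsub hrest, Finset.sum_pair hjk.ne]
  rw [Finset.sum_sub_distrib, Finset.sum_const, G.card_neighborFinset_eq_degree, nsmul_eq_mul,
    sub_eq_iff_eq_add] at hsum
  have hj : triangleAmp G i j k a (i, j) =
      -a * (((G.degree i : ℂ) + (G.degree j : ℂ) - (G.degree k : ℂ)) / 2 - 1) := by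
    simp [triangleAmp]
  have hk : triangleAmp G i j k a (i, k) =
      -a * (((G.degree i : ℂ) + (G.degree k : ℂ) - (G.degree j : ℂ)) / 2 - 1) := by
    simp [triangleAmp, hij.ne, hjk.ne.symm]
  rw [hsum, hj, hk]
  ring

lemma sum_triangleAmp {i j k : V} (hij : G.Adj i j) (hik : G.Adj i k) (hjk : G.Adj j k)
    (a : ℂ) {v : V} (hv : v ∈ ({i, j, k} : Finset V)) :
    ∑ w ∈ G.neighborFinset v, triangleAmp G i j k a (v, w) = 0 := by
  simp only [Finset.mem_insert, Finset.mem_singleton] at hv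
  rcases hv with rfl | rfl | rfl
  · exact sum_triangleAmp_fst hij hik hjk a
  · rw [← triangleAmp_swap_left]
    exact sum_triangleAmp_fst hij.symm hjk hik a
  · rw [← triangleAmp_swap_right, ← triangleAmp_swap_left]
    exact sum_triangleAmp_fst hik.symm hjk.symm hij a

end GraphWalk

theorem marked_triangle_stationary_general {V : Type*} [Fintype V] [DecidableEq V]
    (G : SimpleGraph V) [DecidableRel G.Adj]
    (i j k : V) (hij : G.Adj i j) (hik : G.Adj i k) (hjk : G.Adj j k) (a : ℂ) :
    GraphWalk.step G {i, j, k}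
      (fun e =>
        if e.toProd = (i, j) ∨ e.toProd = (j, i) then
          -a * (((G.degree i : ℂ) + (G.degree j : ℂ) - (G.degree k : ℂ)) / 2 - 1)
        else if e.toProd = (i, k) ∨ e.toProd = (k, i) then
          -a * (((G.degree i : ℂ) + (G.degree k : ℂ) - (G.degree j : ℂ)) / 2 - 1)
        else if e.toProd = (j, k) ∨ e.toProd = (k, j) then
          -a * (((G.degree j : ℂ) + (G.degree k : ℂ) - (G.degree i : ℂ)) / 2 - 1)
        else a)
    = fun e =>
        if e.toProd = (i, j) ∨ e.toProd = (j, i) then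
          -a * (((G.degree i : ℂ) + (G.degree j : ℂ) - (G.degree k : ℂ)) / 2 - 1)
        else if e.toProd = (i, k) ∨ e.toProd = (k, i) then
          -a * (((G.degree i : ℂ) + (G.degree k : ℂ) - (G.degree j : ℂ)) / 2 - 1)
        else if e.toProd = (j, k) ∨ e.toProd = (k, j) then
          -a * (((G.degree j : ℂ) + (G.degree k : ℂ) - (G.degree i : ℂ)) / 2 - 1)
        else a := by
  change GraphWalk.step G {i, j, k} (fun e => GraphWalk.triangleAmp G i j k a e.toProd)
    = fun e => GraphWalk.triangleAmp G i j k a e.toProd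
  refine GraphWalk.step_eq_self G (fun e => GraphWalk.triangleAmp_swap i j k a e.toProd)
    (fun v hv => ?_) (fun e e' he he' => ?_)
  · rw [G.sum_dart_fst_eq_sum_neighborFinset v, GraphWalk.sum_triangleAmp hij hik hjk a hv]
  · rw [GraphWalk.triangleAmp_of_fst_notMem a he,
      GraphWalk.triangleAmp_of_fst_notMem a (he' ▸ he : e'.fst ∉ _)]

/-- Let `i, j, k` be three pairwise adjacent marked vertices (a marked triangle) of a
finite simple graph in which every vertex has positive degree. With
`l_{ij} = (deg(i)+deg(j)−deg(k))/2 − 1` (and cyclically), the state equal to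
`-a·l_{ij}` on both darts between `i` and `j`, `-a·l_{ik}` on both darts between `i`
and `k`, `-a·l_{jk}` on both darts between `j` and `k`, and `a` on every other dart,
is fixed by one step of the search algorithm with marked set `{i, j, k}`. -/
theorem marked_triangle_stationary {V : Type*} [Fintype V] [DecidableEq V]
    (G : SimpleGraph V) [DecidableRel G.Adj] (hdeg : ∀ v : V, 0 < G.degree v)
    (i j k : V) (hij : G.Adj i j) (hik : G.Adj i k) (hjk : G.Adj j k) (a : ℂ) :
    GraphWalk.step G {i, j, k}
      (fun e =>
        if e.toProd = (i, j) ∨ e.toProd = (j, i) then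
          -a * (((G.degree i : ℂ) + (G.degree j : ℂ) - (G.degree k : ℂ)) / 2 - 1)
        else if e.toProd = (i, k) ∨ e.toProd = (k, i) then
          -a * (((G.degree i : ℂ) + (G.degree k : ℂ) - (G.degree j : ℂ)) / 2 - 1)
        else if e.toProd = (j, k) ∨ e.toProd = (k, j) then
          -a * (((G.degree j : ℂ) + (G.degree k : ℂ) - (G.degree i : ℂ)) / 2 - 1)
        else a)
    = fun e =>
        if e.toProd = (i, j) ∨ e.toProd = (j, i) then
          -a * (((G.degree i : ℂ) + (G.degree j : ℂ) - (G.degree k : ℂ)) / 2 - 1)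
        else if e.toProd = (i, k) ∨ e.toProd = (k, i) then
          -a * (((G.degree i : ℂ) + (G.degree k : ℂ) - (G.degree j : ℂ)) / 2 - 1)
        else if e.toProd = (j, k) ∨ e.toProd = (k, j) then
          -a * (((G.degree j : ℂ) + (G.degree k : ℂ) - (G.degree i : ℂ)) / 2 - 1)
        else a :=
  marked_triangle_stationary_general G i j k hij hik hjk a
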